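/- Let H be the 4-dimensional monoidal Hom-Hopf algebra (a Hom-deformation of Sweedler's Hopf algebra) generated by g, x with g²=1, x²=0, gx=-xg, 1·x=x·1=-x, twist α(1)=1, α(g)=g, α(x)=-x, α(gx)=-gx, coproduct Δ(g)=g⊗g, Δ(x)=(-x)⊗g + 1⊗(-x), ε(g)=1, ε(x)=0, antipode S(g)=g, S(x)=-gx. Then R = ½(1⊗1 + 1⊗g + g⊗1 - g⊗g) is a quasitriangular structure on (H,α), over a field of characteristic ≠ 2. -/
import Mathlib


open TensorProduct LinearMap

/-- A unital monoidal Hom-associative algebra. -/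
structure HomAlg (k : Type*) [Field k] (A : Type*) [AddCommGroup A] [Module k A] where
  au : A ≃ₗ[k] A
  mul : A →ₗ[k] A →ₗ[k] A
  one : A
  hom_assoc : ∀ x y z : A, mul (au x) (mul y z) = mul (mul x y) (au z)
  one_mul' : ∀ x : A, mul one x = au x
  mul_one' : ∀ x : A, mul x one = au x
  au_mul : ∀ x y : A, au (mul x y) = mul (au x) (au y)
  au_one : au one = one

/-- A counital monoidal Hom-coassociative coalgebra. -/
structure HomCoalg (k : Type*) [Field k] (C : Type*) [AddCommGroup C] [Module k C] where
  au : C ≃ₗ[k] C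
  comul : C →ₗ[k] C ⊗[k] C
  counit : C →ₗ[k] k
  hom_coassoc : (TensorProduct.map au.symm.toLinearMap comul) ∘ₗ comul
    = (TensorProduct.assoc k C C C).toLinearMap ∘ₗ (TensorProduct.map comul au.symm.toLinearMap) ∘ₗ comul
  counit_comul : ∀ c : C,
    (TensorProduct.lid k C) ((TensorProduct.map counit LinearMap.id) (comul c)) = au.symm c
  comul_counit : ∀ c : C,
    (TensorProduct.rid k C) ((TensorProduct.map LinearMap.id counit) (comul c)) = au.symm c
  comul_au : ∀ c : C, comul (au c) = (TensorProduct.map au.toLinearMap au.toLinearMap) (comul c)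
  counit_au : ∀ c : C, counit (au c) = counit c

/-- A monoidal Hom-bialgebra. -/
structure HomBialg (k : Type*) [Field k] (H : Type*) [AddCommGroup H] [Module k H]
    extends HomAlg k H, HomCoalg k H where
  comul_mul : ∀ x y : H, comul (mul x y)
    = (TensorProduct.map (TensorProduct.lift mul) (TensorProduct.lift mul))
        ((TensorProduct.tensorTensorTensorComm k H H H H) (comul x ⊗ₜ[k] comul y))
  comul_one : comul one = one ⊗ₜ[k] one
  counit_mul : ∀ x y : H, counit (mul x y) = counit x * counit y
  counit_one : counit one = 1

/-- A monoidal Hom-Hopf algebra. -/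
structure HomHopf (k : Type*) [Field k] (H : Type*) [AddCommGroup H] [Module k H]
    extends HomBialg k H where
  S : H →ₗ[k] H
  S_au : S ∘ₗ au.toLinearMap = au.toLinearMap ∘ₗ S
  S_mul_id : ∀ x : H,
    TensorProduct.lift mul ((TensorProduct.map S LinearMap.id) (comul x)) = counit x • one
  id_mul_S : ∀ x : H,
    TensorProduct.lift mul ((TensorProduct.map LinearMap.id S) (comul x)) = counit x • one

section QT

variable {k : Type*} [Field k] {H : Type*} [AddCommGroup H] [Module k H]

/-- Componentwise Hom-multiplication on `H ⊗ H`. -/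
noncomputable def mul2 (mul : H →ₗ[k] H →ₗ[k] H) :
    (H ⊗[k] H) ⊗[k] (H ⊗[k] H) →ₗ[k] H ⊗[k] H :=
  (TensorProduct.map (TensorProduct.lift mul) (TensorProduct.lift mul))
    ∘ₗ (TensorProduct.tensorTensorTensorComm k H H H H).toLinearMap

/-- Componentwise Hom-multiplication on `(H ⊗ H) ⊗ H`. -/
noncomputable def mul3 (mul : H →ₗ[k] H →ₗ[k] H) :
    ((H ⊗[k] H) ⊗[k] H) ⊗[k] ((H ⊗[k] H) ⊗[k] H) →ₗ[k] (H ⊗[k] H) ⊗[k] H :=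
  (TensorProduct.map (mul2 mul) (TensorProduct.lift mul))
    ∘ₗ (TensorProduct.tensorTensorTensorComm k (H ⊗[k] H) H (H ⊗[k] H) H).toLinearMap

/-- `R¹² = Σ R⁽¹⁾ ⊗ R⁽²⁾ ⊗ 1`. -/
noncomputable def R12 (one : H) (R : H ⊗[k] H) : (H ⊗[k] H) ⊗[k] H := R ⊗ₜ[k] one

/-- `R¹³ = Σ R⁽¹⁾ ⊗ 1 ⊗ R⁽²⁾`. -/
noncomputable def R13 (one : H) (R : H ⊗[k] H) : (H ⊗[k] H) ⊗[k] H :=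
  (LinearMap.rTensor H ((TensorProduct.mk k H H).flip one)) R

/-- `R²³ = Σ 1 ⊗ R⁽¹⁾ ⊗ R⁽²⁾`. -/
noncomputable def R23 (one : H) (R : H ⊗[k] H) : (H ⊗[k] H) ⊗[k] H :=
  (LinearMap.rTensor H (TensorProduct.mk k H H one)) R

/-- A quasitriangular structure `R` on a monoidal Hom-Hopf algebra `(H,α)`. -/
structure IsQuasitriangular (Hh : HomHopf k H) (R : H ⊗[k] H) : Prop where
  counit_fst : (TensorProduct.lid k H)
    ((TensorProduct.map Hh.counit LinearMap.id) R) = Hh.one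
  counit_snd : (TensorProduct.rid k H)
    ((TensorProduct.map LinearMap.id Hh.counit) R) = Hh.one
  intertwine : ∀ x : H,
    mul2 Hh.mul (((TensorProduct.comm k H H) (Hh.comul x)) ⊗ₜ[k] R)
      = mul2 Hh.mul (R ⊗ₜ[k] Hh.comul x)
  comul_fst : (TensorProduct.map Hh.comul Hh.au.symm.toLinearMap) R
    = mul3 Hh.mul (R13 Hh.one R ⊗ₜ[k] R23 Hh.one R)
  comul_snd : (TensorProduct.assoc k H H H).symm
      ((TensorProduct.map Hh.au.symm.toLinearMap Hh.comul) R)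
    = mul3 Hh.mul (R13 Hh.one R ⊗ₜ[k] R12 Hh.one R)

end QT
set_option maxRecDepth 4000 in
set_option maxHeartbeats 1000000 in
/-- Let `(H,α)` be the 4-dimensional monoidal Hom-Hopf algebra
(Hom-deformation of Sweedler's Hopf algebra) generated by `g, x` with `g² = 1`,
`x² = 0`, `gx = -xg`, twist `α(g) = g`, `α(x) = -x`, coproduct `Δ(g) = g⊗g`,
`Δ(x) = (-x)⊗g + 1⊗(-x)`, counit `ε(g) = 1`, `ε(x) = 0` and antipode `S(g) = g`,
`S(x) = -gx`, over a field of characteristic `≠ 2`. Then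
`R = ½(1⊗1 + 1⊗g + g⊗1 - g⊗g)` is a quasitriangular structure on `(H,α)`. -/
theorem sweedler_hom_quasitriangular
    {k : Type*} [Field k] (h2 : (2 : k) ≠ 0)
    {H : Type*} [AddCommGroup H] [Module k H]
    (Hh : HomHopf k H) (g x : H)
    (hspan : Submodule.span k ({Hh.one, g, x, Hh.mul g x} : Set H) = ⊤)
    (hgg : Hh.mul g g = Hh.one)
    (hxx : Hh.mul x x = 0)
    (hgx : Hh.mul g x = - Hh.mul x g)
    (haug : Hh.au g = g)
    (haux : Hh.au x = - x)
    (hcomulg : Hh.comul g = g ⊗ₜ[k] g)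
    (hcomulx : Hh.comul x = (-x) ⊗ₜ[k] g + Hh.one ⊗ₜ[k] (-x))
    (hcounitg : Hh.counit g = 1)
    (hcounitx : Hh.counit x = 0)
    (hSg : Hh.S g = g)
    (hSx : Hh.S x = - Hh.mul g x) :
    IsQuasitriangular Hh
      ((2 : k)⁻¹ • (Hh.one ⊗ₜ[k] Hh.one + Hh.one ⊗ₜ[k] g + g ⊗ₜ[k] Hh.one
        - g ⊗ₜ[k] g)) := by

  classical
  set R : H ⊗[k] H := ((2 : k)⁻¹ • (Hh.one ⊗ₜ[k] Hh.one + Hh.one ⊗ₜ[k] g + g ⊗ₜ[k] Hh.one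
        - g ⊗ₜ[k] g)) with hR
  set w : H := Hh.mul g x with hw
  have h11 : Hh.mul Hh.one Hh.one = Hh.one := by rw [Hh.mul_one', Hh.au_one]
  have h1g : Hh.mul Hh.one g = g := by rw [Hh.one_mul', haug]
  have hg1 : Hh.mul g Hh.one = g := by rw [Hh.mul_one', haug]
  have h1x : Hh.mul Hh.one x = -x := by rw [Hh.one_mul', haux]
  have hx1 : Hh.mul x Hh.one = -x := by rw [Hh.mul_one', haux]
  have hxg : Hh.mul x g = -w := by rw [hgx, neg_neg]
  have hauw : Hh.au w = -w := by
    rw [hw, Hh.au_mul, haug, haux, map_neg]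
  have h1w : Hh.mul Hh.one w = -w := by rw [Hh.one_mul', hauw]
  have hw1 : Hh.mul w Hh.one = -w := by rw [Hh.mul_one', hauw]
  have hgw : Hh.mul g w = x := by
    have := Hh.hom_assoc g g x
    simp only [haug, haux, hgg, Hh.one_mul', map_neg, neg_neg] at this
    rw [hw, this]
  have hwg : Hh.mul w g = -x := by
    have := Hh.hom_assoc g x g
    simp only [haug, hxg, map_neg, hgw] at this
    rw [← this]
  have hs1 : Hh.au.symm Hh.one = Hh.one := by
    conv_lhs => rw [← Hh.au_one]
    exact Hh.au.symm_apply_apply _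
  have hsg : Hh.au.symm g = g := by
    conv_lhs => rw [← haug]
    exact Hh.au.symm_apply_apply _
  have hcomulw : Hh.comul w = (-w) ⊗ₜ[k] Hh.one + g ⊗ₜ[k] (-w) := by
    rw [hw, Hh.comul_mul, hcomulg, hcomulx]
    simp [tmul_add, lift.tmul, hgg, hg1, ← hw]
  refine ⟨?_, ?_, ?_, ?_, ?_⟩
  · simp only [hR, map_smul, map_add, map_sub, map_tmul, lid_tmul, id_coe, id_eq,
      hcounitg, Hh.counit_one, one_smul]
    match_scalars <;> field_simp <;> ring
  · simp only [hR, map_smul, map_add, map_sub, map_tmul, rid_tmul, id_coe, id_eq,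
      hcounitg, Hh.counit_one, one_smul]
    match_scalars <;> field_simp <;> ring
  · -- intertwine
    have key : (mul2 Hh.mul ∘ₗ ((TensorProduct.mk k (H ⊗[k] H) (H ⊗[k] H)).flip R)
          ∘ₗ (TensorProduct.comm k H H).toLinearMap ∘ₗ Hh.comul)
        = (mul2 Hh.mul ∘ₗ (TensorProduct.mk k (H ⊗[k] H) (H ⊗[k] H) R) ∘ₗ Hh.comul) := by
      apply LinearMap.ext_on hspan
      intro a ha
      simp only [Set.mem_insert_iff, Set.mem_singleton_iff] at ha
      rcases ha with rfl | rfl | rfl | rfl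
      · simp only [coe_comp, Function.comp_apply, LinearEquiv.coe_coe,
          TensorProduct.mk_apply, flip_apply, LinearMap.smul_apply, LinearMap.add_apply, LinearMap.sub_apply, Hh.comul_one, comm_tmul, hR, mul2,
          tensorTensorTensorComm_tmul, ← smul_tmul', tmul_smul, tmul_add, add_tmul,
          tmul_sub, sub_tmul, map_add, map_sub, map_smul, map_tmul, lift.tmul,
          h11, h1g, hg1, hgg]
      · simp only [coe_comp, Function.comp_apply, LinearEquiv.coe_coe,
          TensorProduct.mk_apply, flip_apply, LinearMap.smul_apply, LinearMap.add_apply, LinearMap.sub_apply, hcomulg, comm_tmul, hR, mul2,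
          tensorTensorTensorComm_tmul, ← smul_tmul', tmul_smul, tmul_add, add_tmul,
          tmul_sub, sub_tmul, map_add, map_sub, map_smul, map_tmul, lift.tmul,
          h11, h1g, hg1, hgg]
        try module
      · simp only [coe_comp, Function.comp_apply, LinearEquiv.coe_coe,
          TensorProduct.mk_apply, flip_apply, LinearMap.smul_apply, LinearMap.add_apply, LinearMap.sub_apply, hcomulx, map_add, comm_tmul, hR, mul2,
          tensorTensorTensorComm_tmul, ← smul_tmul', tmul_smul, tmul_add, add_tmul,
          tmul_sub, sub_tmul, neg_tmul, tmul_neg, map_neg, map_sub, map_smul,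
          map_tmul, lift.tmul, h11, h1g, hg1, hgg, h1x, hx1, hxg]
        module
      · simp only [coe_comp, Function.comp_apply, LinearEquiv.coe_coe,
          TensorProduct.mk_apply, flip_apply, LinearMap.smul_apply, LinearMap.add_apply, LinearMap.sub_apply, hcomulw, map_add, comm_tmul, hR, mul2,
          tensorTensorTensorComm_tmul, ← smul_tmul', tmul_smul, tmul_add, add_tmul,
          tmul_sub, sub_tmul, neg_tmul, tmul_neg, map_neg, map_sub, map_smul,
          map_tmul, lift.tmul, h11, h1g, hg1, hgg, h1w, hw1, hwg, hgw]
        module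
    intro a
    have := LinearMap.congr_fun key a
    simpa only [coe_comp, Function.comp_apply, LinearEquiv.coe_coe,
      TensorProduct.mk_apply, flip_apply] using this
  · -- comul_fst
    simp only [hR, R13, R23, mul3, mul2, map_smul, map_add, map_sub, map_tmul,
      rTensor_tmul, TensorProduct.mk_apply, flip_apply, ← smul_tmul', tmul_smul,
      tmul_add, add_tmul, tmul_sub, sub_tmul, coe_comp, Function.comp_apply,
      LinearEquiv.coe_coe, tensorTensorTensorComm_tmul, lift.tmul,
      Hh.comul_one, hcomulg, hs1, hsg, h11, h1g, hg1, hgg, id_coe, id_eq]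
    match_scalars <;> field_simp <;> ring
  · -- comul_snd
    simp only [hR, R13, R12, mul3, mul2, map_smul, map_add, map_sub, map_tmul,
      rTensor_tmul, TensorProduct.mk_apply, flip_apply, ← smul_tmul', tmul_smul,
      tmul_add, add_tmul, tmul_sub, sub_tmul, coe_comp, Function.comp_apply,
      LinearEquiv.coe_coe, tensorTensorTensorComm_tmul, lift.tmul, assoc_symm_tmul,
      Hh.comul_one, hcomulg, hs1, hsg, h11, h1g, hg1, hgg, id_coe, id_eq]
    match_scalars <;> field_simp <;> ring
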